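/- arXiv:math/0504166 — 4 statements merged into one kernel-verified Lean document; each statement's English description precedes it below -/
import Mathlib

section
/- Let G be a symmetric positive definite p×p real matrix with nonnegative entries such that G⁻¹ is an M-matrix. Then there exist a diagonal matrix D with strictly positive diagonal entries, a constant c > 0, and an entrywise nonnegative matrix T with all row sums strictly less than 1 and spectral radius strictly less than 1, such that c·D G D⁻¹ = (I − T)⁻¹. -/
/-- An `M`-matrix: nonpositive off-diagonal entries, nonsingular,
with entrywise nonnegative inverse. -/
def IsMMatrix {p : ℕ} (A : Matrix (Fin p) (Fin p) ℝ) : Prop :=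
  (∀ i j, i ≠ j → A i j ≤ 0) ∧ IsUnit A.det ∧ ∀ i j, 0 ≤ A⁻¹ i j

/-- Eigenvalue bound by maximal row sum, for nonnegative T. -/
lemma spectrum_lt_one_of_rowsum {p : ℕ} (T : Matrix (Fin p) (Fin p) ℝ)
    (hTnn : ∀ i j, 0 ≤ T i j) (hrow : ∀ i, ∑ j, T i j < 1) :
    ∀ μ ∈ spectrum ℂ (T.map (Complex.ofReal ·)), ‖μ‖ < 1 := by
  intro μ hμ
  set M := T.map (Complex.ofReal ·) with hMdef
  rw [← AlgEquiv.spectrum_eq (Matrix.toLinAlgEquiv' (R := ℂ) (n := Fin p)),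
    ← Module.End.hasEigenvalue_iff_mem_spectrum] at hμ
  obtain ⟨v, hv⟩ := hμ.exists_hasEigenvector
  have hvne : v ≠ 0 := hv.right
  have hmv : M.mulVec v = μ • v := by
    have := hv.apply_eq_smul
    rwa [Matrix.toLinAlgEquiv'_apply] at this
  have hne : Nonempty (Fin p) := by
    by_contra h
    rw [not_nonempty_iff] at h
    exact hvne (Subsingleton.elim _ _)
  obtain ⟨i, -, hi⟩ := Finset.exists_max_image Finset.univ (fun j => ‖v j‖)
    ⟨Classical.arbitrary (Fin p), Finset.mem_univ _⟩
  have hvipos : 0 < ‖v i‖ := by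
    rcases (norm_nonneg (v i)).eq_or_lt with h | h
    · exfalso; apply hvne; funext j
      have h2 : ‖v j‖ ≤ 0 := by rw [h]; exact hi j (Finset.mem_univ j)
      simpa using le_antisymm h2 (norm_nonneg _)
    · exact h
  have h1 : μ * v i = ∑ j, M i j * v j := by
    have h0 := congrFun hmv i
    simp only [Matrix.mulVec, dotProduct, Pi.smul_apply, smul_eq_mul] at h0
    exact h0.symm
  have key : ‖μ‖ * ‖v i‖ ≤ (∑ j, T i j) * ‖v i‖ := by
    calc ‖μ‖ * ‖v i‖ = ‖μ * v i‖ := (norm_mul _ _).symm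
      _ = ‖∑ j, M i j * v j‖ := by rw [h1]
      _ ≤ ∑ j, ‖M i j * v j‖ := norm_sum_le _ _
      _ ≤ ∑ j, T i j * ‖v i‖ := by
          apply Finset.sum_le_sum
          intro j _
          rw [norm_mul]
          have hMij : ‖M i j‖ = T i j := by
            simp [hMdef, Matrix.map_apply, Complex.norm_real, abs_of_nonneg (hTnn i j)]
          rw [hMij]
          exact mul_le_mul_of_nonneg_left (hi j (Finset.mem_univ j)) (hTnn i j)
      _ = (∑ j, T i j) * ‖v i‖ := by rw [Finset.sum_mul]
  exact lt_of_le_of_lt (le_of_mul_le_mul_right key hvipos) (hrow i)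

/-- If `G` is a symmetric positive definite matrix with nonnegative entries
whose inverse is an `M`-matrix, then `c • D G D⁻¹ = (1 - T)⁻¹` for some
diagonal `D > 0`, constant `c > 0`, and substochastic `T` with spectral
radius `< 1`: `G` is, up to a diagonal conjugation and a constant, the
Green function of a transient Markov chain. -/
theorem covariance_green_representation {p : ℕ}
    (G : Matrix (Fin p) (Fin p) ℝ) (hsymm : G.IsSymm) (hpd : G.PosDef)
    (hnn : ∀ i j, 0 ≤ G i j) (hM : IsMMatrix G⁻¹) :
    ∃ (d : Fin p → ℝ) (c : ℝ) (T : Matrix (Fin p) (Fin p) ℝ),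
      (∀ i, 0 < d i) ∧ 0 < c ∧
      (∀ i j, 0 ≤ T i j) ∧ (∀ i, ∑ j, T i j < 1) ∧
      (∀ μ ∈ spectrum ℂ (T.map (Complex.ofReal ·)), ‖μ‖ < 1) ∧
      c • (Matrix.diagonal d * G * Matrix.diagonal (fun i => (d i)⁻¹))
        = ((1 : Matrix (Fin p) (Fin p) ℝ) - T)⁻¹ := by
  classical
  set A := G⁻¹ with hAdef
  have hGdet : IsUnit G.det := isUnit_iff_ne_zero.mpr (ne_of_gt hpd.det_pos)
  have hAG : A * G = 1 := Matrix.nonsing_inv_mul G hGdet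
  -- diagonal entries of G are positive
  have hdiag : ∀ i, 0 < G i i := fun i => by
    have hsing : (Pi.single i (1:ℝ) : Fin p → ℝ) ≠ 0 := by
      intro h
      have h7 := congrFun h i
      simp [Pi.single_apply] at h7
    exact hpd.diag_pos
  set s : Fin p → ℝ := fun i => ∑ k, G i k with hsdef
  have hs : ∀ i, 0 < s i := fun i => lt_of_lt_of_le (hdiag i)
    (Finset.single_le_sum (f := fun k => G i k) (fun k _ => hnn i k) (Finset.mem_univ i))
  set d : Fin p → ℝ := fun i => (s i)⁻¹ with hddef
  have hd : ∀ i, 0 < d i := fun i => inv_pos.mpr (hs i)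
  set c : ℝ := 1 + ∑ i, |A i i| with hcdef
  have hc : 0 < c := by
    have : (0:ℝ) ≤ ∑ i, |A i i| := Finset.sum_nonneg fun i _ => abs_nonneg _
    linarith
  have hcA : ∀ i, A i i ≤ c := fun i => by
    have h1 : |A i i| ≤ ∑ k, |A k k| :=
      Finset.single_le_sum (f := fun k => |A k k|) (fun k _ => abs_nonneg _) (Finset.mem_univ i)
    have := le_abs_self (A i i)
    simp only [hcdef]; linarith
  set D : Matrix (Fin p) (Fin p) ℝ := Matrix.diagonal d with hDdef
  set D' : Matrix (Fin p) (Fin p) ℝ := Matrix.diagonal (fun i => (d i)⁻¹) with hD'def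
  set T : Matrix (Fin p) (Fin p) ℝ := 1 - c⁻¹ • (D * A * D') with hTdef
  have hDAD' : ∀ i j, (D * A * D') i j = d i * A i j * (d j)⁻¹ := by
    intro i j
    rw [hDdef, hD'def, Matrix.mul_diagonal, Matrix.diagonal_mul]
  have hTentry : ∀ i j, T i j = (if i = j then 1 else 0) - c⁻¹ * (d i * A i j * (d j)⁻¹) := by
    intro i j
    rw [hTdef, Matrix.sub_apply, Matrix.smul_apply, hDAD', smul_eq_mul, Matrix.one_apply]
  have hdinv : ∀ i, (d i)⁻¹ = s i := fun i => by
    simp [hddef, inv_inv]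
  -- key row identity: ∑ j, A i j * s j = 1
  have hkey : ∀ i, ∑ j, A i j * s j = 1 := by
    intro i
    have h3 : ∑ j, A i j * s j = ∑ k, (A * G) i k := by
      simp only [hsdef, Finset.mul_sum, Matrix.mul_apply]
      rw [Finset.sum_comm]
    rw [h3, hAG]
    simp [Matrix.one_apply]
  have hTnn : ∀ i j, 0 ≤ T i j := by
    intro i j
    by_cases h : i = j
    · subst h
      rw [hTentry i i, hdinv i, if_pos rfl]
      have hds : d i * A i i * s i = A i i := by
        rw [← hdinv i, mul_assoc, mul_comm (A i i), ← mul_assoc, mul_inv_cancel₀ (hd i).ne', one_mul]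
      rw [hds]
      have h2 : c⁻¹ * A i i ≤ c⁻¹ * c := mul_le_mul_of_nonneg_left (hcA i) (inv_pos.mpr hc).le
      rw [inv_mul_cancel₀ hc.ne'] at h2
      linarith
    · rw [hTentry i j, hdinv j, if_neg h]
      have hA0 : A i j ≤ 0 := hM.1 i j h
      have h4 : d i * A i j * s j ≤ 0 :=
        mul_nonpos_of_nonpos_of_nonneg
          (mul_nonpos_of_nonneg_of_nonpos (le_of_lt (hd i)) hA0) (le_of_lt (hs j))
      nlinarith [inv_pos.mpr hc]
  have hrow : ∀ i, ∑ j, T i j < 1 := by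
    intro i
    have hsum : ∑ j, T i j = 1 - c⁻¹ * d i := by
      simp only [hTentry]
      rw [Finset.sum_sub_distrib]
      have h1 : ∑ j, (if i = j then (1:ℝ) else 0) = 1 := by simp
      have h2 : ∑ j, c⁻¹ * (d i * A i j * (d j)⁻¹) = c⁻¹ * d i := by
        rw [← Finset.mul_sum]
        congr 1
        have h5 : ∑ j, d i * A i j * (d j)⁻¹ = d i * ∑ j, A i j * s j := by
          rw [Finset.mul_sum]
          exact Finset.sum_congr rfl fun j _ => by rw [hdinv j]; ring
        rw [h5, hkey i, mul_one]
      rw [h1, h2]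
    rw [hsum]
    nlinarith [inv_pos.mpr hc, hd i]
  refine ⟨d, c, T, hd, hc, hTnn, hrow, spectrum_lt_one_of_rowsum T hTnn hrow, ?_⟩
  -- final equality
  have h1T : (1 : Matrix (Fin p) (Fin p) ℝ) - T = c⁻¹ • (D * A * D') := by
    rw [hTdef, sub_sub_cancel]
  have hDD' : D' * D = 1 := by
    rw [hD'def, hDdef, Matrix.diagonal_mul_diagonal]
    have h6 : (fun i => (d i)⁻¹ * d i) = fun _ : Fin p => (1:ℝ) :=
      funext fun i => inv_mul_cancel₀ (hd i).ne'
    rw [h6]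
    exact Matrix.diagonal_one
  have hD'D : D * D' = 1 := by
    rw [hDdef, hD'def, Matrix.diagonal_mul_diagonal]
    have h6 : (fun i => d i * (d i)⁻¹) = fun _ : Fin p => (1:ℝ) :=
      funext fun i => mul_inv_cancel₀ (hd i).ne'
    rw [h6]
    exact Matrix.diagonal_one
  have hmul : ((1 : Matrix (Fin p) (Fin p) ℝ) - T) * (c • (D * G * D')) = 1 := by
    rw [h1T, Matrix.smul_mul, Matrix.mul_smul, smul_smul, inv_mul_cancel₀ hc.ne', one_smul]
    calc D * A * D' * (D * G * D') = D * A * (D' * D) * G * D' := by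
          noncomm_ring
      _ = D * A * G * D' := by rw [hDD']; noncomm_ring
      _ = D * D' := by rw [Matrix.mul_assoc D A G, hAG, Matrix.mul_one]
      _ = 1 := hD'D
  exact (Matrix.inv_eq_right_inv hmul).symm
end

section
/- Let G be a 3×3 symmetric positive definite matrix with nonnegative entries satisfying G(i,j)·G(k,k) ≥ G(i,k)·G(j,k) for all choices of distinct indices i, j, k in {1,2,3}. Then all off-diagonal entries of G⁻¹ are nonpositive. -/
/-!
Since `G⁻¹ = (det G)⁻¹ • adj G` with `det G > 0`, it suffices that the off-diagonal cofactors are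
nonpositive. In dimension three the `(i, j)` entry of the adjugate is `G i k * G k j - G i j * G k k`
for the remaining index `k`, which is exactly what the Green inequality controls.
-/

namespace Matrix

theorem inv_apply_nonpos_of_adjugate_apply_nonpos {n 𝕜 : Type*} [Fintype n] [DecidableEq n]
    [Field 𝕜] [LinearOrder 𝕜] [IsStrictOrderedRing 𝕜] {A : Matrix n n 𝕜} (hdet : 0 < A.det)
    {i j : n} (hadj : A.adjugate i j ≤ 0) : A⁻¹ i j ≤ 0 := by
  rw [inv_def, Ring.inverse_eq_inv', smul_apply, smul_eq_mul]
  exact mul_nonpos_of_nonneg_of_nonpos (inv_nonneg.mpr hdet.le) hadj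

theorem adjugate_fin_three_apply_of_ne {R : Type*} [CommRing R] (A : Matrix (Fin 3) (Fin 3) R)
    {i j k : Fin 3} (hij : i ≠ j) (hjk : j ≠ k) (hik : i ≠ k) :
    A.adjugate i j = A i k * A k j - A i j * A k k := by
  rw [adjugate_fin_three]
  fin_cases i <;> fin_cases j <;> fin_cases k <;> simp_all <;> ring

end Matrix

theorem Fin.exists_ne_ne_of_three (i j : Fin 3) : ∃ k, i ≠ k ∧ j ≠ k := by
  revert i j; decide

theorem inv_offdiag_nonpos_of_green_inequality_general
    (G : Matrix (Fin 3) (Fin 3) ℝ) (hsymm : G.IsSymm) (hpd : G.PosDef)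
    (htri : ∀ i j k : Fin 3, i ≠ j → j ≠ k → i ≠ k →
      G i k * G j k ≤ G i j * G k k) :
    ∀ i j, i ≠ j → G⁻¹ i j ≤ 0 := by
  intro i j hij
  obtain ⟨k, hik, hjk⟩ := Fin.exists_ne_ne_of_three i j
  refine Matrix.inv_apply_nonpos_of_adjugate_apply_nonpos hpd.det_pos ?_
  rw [G.adjugate_fin_three_apply_of_ne hij hjk hik, hsymm.apply j k]
  linarith [htri i j k hij hjk hik]

/-- For a `3 × 3` symmetric positive definite matrix `G` with nonnegative
entries satisfying the triangle Green-function inequality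
`G(i,k) G(j,k) ≤ G(i,j) G(k,k)` for all distinct `i, j, k`, all off-diagonal
entries of `G⁻¹` are nonpositive. -/
theorem inv_offdiag_nonpos_of_green_inequality
    (G : Matrix (Fin 3) (Fin 3) ℝ) (hsymm : G.IsSymm) (hpd : G.PosDef)
    (hnn : ∀ i j, 0 ≤ G i j)
    (htri : ∀ i j k : Fin 3, i ≠ j → j ≠ k → i ≠ k →
      G i k * G j k ≤ G i j * G k k) :
    ∀ i j, i ≠ j → G⁻¹ i j ≤ 0 :=
  inv_offdiag_nonpos_of_green_inequality_general G hsymm hpd htri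
end

section
/- Let K = [a,b] be a compact interval and G : K × K → ℝ a continuous symmetric function such that for every x ∈ K the set C(x) = {u ∈ K : G(x,u) ≠ 0} is nonempty (e.g., G(x,x) ≠ 0). Then for any x, y ∈ K there exist finitely many points a₁, …, a_p ∈ K such that G(x,a₁)·G(a₁,a₂)···G(a_{p−1},a_p)·G(a_p,y) ≠ 0. -/
private lemma prod_snoc_chain (G : ℝ → ℝ → ℝ) {p : ℕ} (z : Fin (p+1) → ℝ) (w : ℝ) :
    (∏ i : Fin (p+1), G ((Fin.snoc z w : Fin (p+2) → ℝ) i.castSucc)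
        ((Fin.snoc z w : Fin (p+2) → ℝ) i.succ)) =
      (∏ i : Fin p, G (z i.castSucc) (z i.succ)) * G (z (Fin.last p)) w := by
  rw [Fin.prod_univ_castSucc]
  congr 1
  · apply Finset.prod_congr rfl
    intro i _
    simp [-Fin.castSucc_succ, Fin.succ_castSucc, Fin.snoc_castSucc]
  · simp [Fin.snoc_castSucc, Fin.snoc_last, Fin.succ_last]

open Finset in
/-- Chaining lemma from the proof of Theorem 3.4: if `G` is continuous and
symmetric on `K × K`, `K = [a,b]`, and for every `x ∈ K` there is `u ∈ K`
with `G(x,u) ≠ 0`, then any two points `x, y ∈ K` can be connected by a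
finite chain `a₁, …, a_p ∈ K` with
`G(x,a₁) G(a₁,a₂) ⋯ G(a_{p-1},a_p) G(a_p,y) ≠ 0`. -/
theorem chain_connect (a b : ℝ) (hab : a ≤ b) (G : ℝ → ℝ → ℝ)
    (hGcont : Continuous fun q : ℝ × ℝ => G q.1 q.2)
    (hGsymm : ∀ x y, G x y = G y x)
    (hne : ∀ x ∈ Set.Icc a b, ∃ u ∈ Set.Icc a b, G x u ≠ 0) :
    ∀ x ∈ Set.Icc a b, ∀ y ∈ Set.Icc a b,
      ∃ (p : ℕ) (z : Fin (p + 1) → ℝ),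
        (∀ i, z i ∈ Set.Icc a b) ∧
        G x (z 0) * (∏ i : Fin p, G (z i.castSucc) (z i.succ)) *
          G (z (Fin.last p)) y ≠ 0 := by
  intro x hx y hy
  haveI : PreconnectedSpace (Set.Icc a b) :=
    Subtype.preconnectedSpace isPreconnected_Icc
  set S : Set (Set.Icc a b) :=
    {w | ∃ (p : ℕ) (z : Fin (p + 1) → ℝ),
      (∀ i, z i ∈ Set.Icc a b) ∧
      G x (z 0) * (∏ i : Fin p, G (z i.castSucc) (z i.succ)) *
        G (z (Fin.last p)) (w : ℝ) ≠ 0} with hS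
  have hcontG : ∀ c : ℝ, Continuous fun w : Set.Icc a b => G c (w : ℝ) := by
    intro c
    exact hGcont.comp (continuous_const.prodMk continuous_subtype_val)
  -- S is open
  have hopen : IsOpen S := by
    rw [isOpen_iff_mem_nhds]
    rintro w ⟨p, z, hz, hprod⟩
    have h1 : G x (z 0) * (∏ i : Fin p, G (z i.castSucc) (z i.succ)) ≠ 0 :=
      left_ne_zero_of_mul hprod
    have hopen' : IsOpen {w' : Set.Icc a b | G (z (Fin.last p)) (w' : ℝ) ≠ 0} :=
      isOpen_compl_singleton.preimage (hcontG (z (Fin.last p)))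
    refine Filter.mem_of_superset (hopen'.mem_nhds (right_ne_zero_of_mul hprod)) ?_
    intro w' hw'
    exact ⟨p, z, hz, mul_ne_zero h1 hw'⟩
  -- S is closed
  have hclosed : IsClosed S := by
    rw [← isOpen_compl_iff, isOpen_iff_mem_nhds]
    intro w hw
    obtain ⟨u, hu, hGu⟩ := hne (w : ℝ) w.2
    have hopen' : IsOpen {w' : Set.Icc a b | G (w' : ℝ) u ≠ 0} := by
      have : Continuous fun w' : Set.Icc a b => G (w' : ℝ) u :=
        hGcont.comp (continuous_subtype_val.prodMk continuous_const)
      exact isOpen_compl_singleton.preimage this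
    refine Filter.mem_of_superset (hopen'.mem_nhds hGu) ?_
    intro w' hw'
    intro hw'S
    apply hw
    obtain ⟨p, z, hz, hprod⟩ := hw'S
    refine ⟨p + 2, Fin.snoc (Fin.snoc z (w' : ℝ)) u, ?_, ?_⟩
    · intro i
      refine Fin.lastCases ?_ (fun j => ?_) i
      · simp [Fin.snoc_last, hu]
      · rw [Fin.snoc_castSucc]
        refine Fin.lastCases ?_ (fun k => ?_) j
        · simp [Fin.snoc_last, w'.2]
        · rw [Fin.snoc_castSucc]; exact hz k
    · have e0 : (Fin.snoc (Fin.snoc z (w' : ℝ)) u : Fin (p+3) → ℝ) 0 = z 0 := by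
        have : ((0 : Fin (p+2)).castSucc : Fin (p+3)) = 0 := by simp
        rw [← this, Fin.snoc_castSucc]
        have : ((0 : Fin (p+1)).castSucc : Fin (p+2)) = 0 := by simp
        rw [← this, Fin.snoc_castSucc]
      have elast : (Fin.snoc (Fin.snoc z (w' : ℝ)) u : Fin (p+3) → ℝ) (Fin.last (p+2)) = u :=
        Fin.snoc_last _ _
      rw [e0, elast, prod_snoc_chain, prod_snoc_chain]
      simp only [Fin.snoc_last]
      have hw'u : G (↑w' : ℝ) u ≠ 0 := hw'
      have hw'y : G u (w : ℝ) ≠ 0 := by rw [hGsymm]; exact hGu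
      have h1 : G x (z 0) ≠ 0 := left_ne_zero_of_mul (left_ne_zero_of_mul hprod)
      have h2 : (∏ i : Fin p, G (z i.castSucc) (z i.succ)) ≠ 0 :=
        right_ne_zero_of_mul (left_ne_zero_of_mul hprod)
      have h3 : G (z (Fin.last p)) (w' : ℝ) ≠ 0 := right_ne_zero_of_mul hprod
      exact mul_ne_zero (mul_ne_zero h1
        (mul_ne_zero (mul_ne_zero h2 h3) hw'u)) hw'y
  -- S is nonempty
  have hxS : (⟨x, hx⟩ : Set.Icc a b) ∈ S := by
    obtain ⟨u, hu, hGu⟩ := hne x hx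
    refine ⟨0, fun _ => u, fun _ => hu, ?_⟩
    simp only [Finset.univ_eq_empty, Finset.prod_empty, mul_one]
    have : G u x ≠ 0 := by rw [hGsymm]; exact hGu
    exact mul_ne_zero hGu this
  have huniv := IsClopen.eq_univ (s := S) ⟨hclosed, hopen⟩ ⟨_, hxS⟩
  have hyS : (⟨y, hy⟩ : Set.Icc a b) ∈ S := huniv ▸ Set.mem_univ _
  exact hyS
end

section
/- Let V be a Markovian kernel operator on ℝ of the form Vf(x) = χ(x)⁻¹ ∫ G(x,y) f(y) m(dy), where G is continuous, nonnegative, symmetric, m is a finite Borel measure with full support, and χ(x) = ∫ G(x,y) m(dy) is continuous and strictly positive. Suppose for every n the restricted operator V_{Kₙ} on Kₙ = [−n,n] (defined with χ_{Kₙ}(x) = ∫_{Kₙ} G(x,y) m(dy) in place of χ) satisfies the complete maximum principle on Kₙ. Then V satisfies the complete maximum principle on ℝ: for all a ≥ 0 and all nonnegative continuous compactly supported f, h, if a + Vf(x) ≥ Vh(x) for all x with h(x) > 0, then a + Vf(x) ≥ Vh(x) for all x ∈ ℝ. -/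
open MeasureTheory

/-- Uniform (Dini-type) convergence on a compact set of the monotone family `χK n`
to `χ`. -/
lemma chiK_uniform (χ : ℝ → ℝ) (χK : ℕ → ℝ → ℝ)
    (hχcont : Continuous χ) (hχKcont : ∀ n, Continuous (χK n))
    (hχKmono : ∀ x, Monotone fun n => χK n x)
    (hχKlim : ∀ x, Filter.Tendsto (fun n => χK n x) Filter.atTop (nhds (χ x)))
    (C : Set ℝ) (hC : IsCompact C) (δ : ℝ) (hδ : 0 < δ) :
    ∃ N : ℕ, ∀ n ≥ N, ∀ x ∈ C, χ x - χK n x < δ := by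
  set U : ℕ → Set ℝ := fun n => {x | χ x - χK n x < δ} with hU
  have hUopen : ∀ n, IsOpen (U n) := fun n =>
    isOpen_lt (hχcont.sub (hχKcont n)) continuous_const
  have hcover : C ⊆ ⋃ n, U n := by
    intro x _
    have : ∀ᶠ n in Filter.atTop, χ x - δ < χK n x :=
      (hχKlim x).eventually (eventually_gt_nhds (by linarith))
    obtain ⟨n, hn⟩ := this.exists
    exact Set.mem_iUnion.2 ⟨n, by simp [hU]; linarith⟩
  obtain ⟨t, ht⟩ := hC.elim_finite_subcover U hUopen hcover
  refine ⟨t.sup id, fun n hn x hx => ?_⟩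
  obtain ⟨i, hi, hxi⟩ := Set.mem_iUnion₂.1 (ht hx)
  have hin : i ≤ n := le_trans (Finset.le_sup (f := id) hi) hn
  have : χK i x ≤ χK n x := hχKmono x hin
  have hxi' : χ x - χK i x < δ := hxi
  linarith

/-- Lemma 4.4 of Eisenbaum–Kaspi: if every restriction `V_{Kₙ}` of the kernel
operator `V f(x) = χ(x)⁻¹ ∫ G(x,y) f(y) m(dy)` to `Kₙ = [-n, n]` satisfies the
complete maximum principle on `Kₙ`, then `V` satisfies the complete maximum
principle on `ℝ`. -/
theorem complete_maximum_principle_global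
    (G : ℝ → ℝ → ℝ) (m : Measure ℝ) [IsFiniteMeasure m]
    (hm : ∀ U : Set ℝ, IsOpen U → U.Nonempty → 0 < m U)
    (hGcont : Continuous fun q : ℝ × ℝ => G q.1 q.2)
    (hGnn : ∀ x y, 0 ≤ G x y)
    (hGsymm : ∀ x y, G x y = G y x)
    (χ : ℝ → ℝ) (hχ : ∀ x, χ x = ∫ y, G x y ∂m)
    (hχcont : Continuous χ) (hχpos : ∀ x, 0 < χ x)
    (χK : ℕ → ℝ → ℝ)
    (hχK : ∀ n x, χK n x = ∫ y in Set.Icc (-(n : ℝ)) n, G x y ∂m)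
    (hχKcont : ∀ n, Continuous (χK n))
    (hχKmono : ∀ x, Monotone fun n => χK n x)
    (hχKle : ∀ n x, χK n x ≤ χ x)
    (hχKlim : ∀ x, Filter.Tendsto (fun n => χK n x) Filter.atTop (nhds (χ x)))
    (V : (ℝ → ℝ) → ℝ → ℝ)
    (hV : ∀ f x, V f x = (χ x)⁻¹ * ∫ y, G x y * f y ∂m)
    (VK : ℕ → (ℝ → ℝ) → ℝ → ℝ)
    (hVK : ∀ n f x, VK n f x
      = (χK n x)⁻¹ * ∫ y in Set.Icc (-(n : ℝ)) n, G x y * f y ∂m)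
    (hCMP : ∀ (n : ℕ) (a : ℝ), 0 ≤ a → ∀ f h : ℝ → ℝ,
      Continuous f → Continuous h → HasCompactSupport f → HasCompactSupport h →
      (∀ x, 0 ≤ f x) → (∀ x, 0 ≤ h x) →
      tsupport f ⊆ Set.Icc (-(n : ℝ)) n → tsupport h ⊆ Set.Icc (-(n : ℝ)) n →
      (∀ x ∈ Set.Icc (-(n : ℝ)) n, 0 < h x → VK n h x ≤ a + VK n f x) →
      ∀ x ∈ Set.Icc (-(n : ℝ)) n, VK n h x ≤ a + VK n f x) :
    ∀ a : ℝ, 0 ≤ a → ∀ f h : ℝ → ℝ,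
      Continuous f → Continuous h → HasCompactSupport f → HasCompactSupport h →
      (∀ x, 0 ≤ f x) → (∀ x, 0 ≤ h x) →
      (∀ x, 0 < h x → V h x ≤ a + V f x) →
      ∀ x, V h x ≤ a + V f x := by
  intro a ha f h hf hh hfc hhc hfnn hhnn hyp x₀
  -- abbreviations for the numerators
  set If : ℝ → ℝ := fun x => ∫ y, G x y * f y ∂m with hIfdef
  set Ih : ℝ → ℝ := fun x => ∫ y, G x y * h y ∂m with hIhdef
  have hIfnn : ∀ x, 0 ≤ If x := fun x =>
    integral_nonneg fun y => mul_nonneg (hGnn x y) (hfnn y)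
  have hIhnn : ∀ x, 0 ≤ Ih x := fun x =>
    integral_nonneg fun y => mul_nonneg (hGnn x y) (hhnn y)
  -- a compact interval containing both supports and the point x₀
  obtain ⟨N₁, hN₁⟩ : ∃ N : ℕ,
      tsupport f ∪ tsupport h ∪ {x₀} ⊆ Set.Icc (-(N : ℝ)) N := by
    have hK : IsCompact (tsupport f ∪ tsupport h ∪ {x₀}) :=
      (hfc.union hhc).union isCompact_singleton
    obtain ⟨r, hr⟩ := hK.isBounded.subset_closedBall 0
    refine ⟨⌈r⌉₊, hr.trans ?_⟩
    rw [Real.closedBall_eq_Icc]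
    have hrc : r ≤ (⌈r⌉₊ : ℝ) := Nat.le_ceil r
    exact Set.Icc_subset_Icc (by linarith) (by linarith)
  set C : Set ℝ := Set.Icc (-(N₁ : ℝ)) N₁ with hCdef
  have hCcomp : IsCompact C := isCompact_Icc
  have hCne : C.Nonempty := ⟨0, by constructor <;> simp⟩
  -- uniform positive lower bound for χ on C
  obtain ⟨xm, hxm, hxmin⟩ := hCcomp.exists_isMinOn hCne hχcont.continuousOn
  set c : ℝ := χ xm with hcdef
  have hc : 0 < c := hχpos xm
  have hcle : ∀ x ∈ C, c ≤ χ x := fun x hx => hxmin hx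
  -- χK n is eventually ≥ c/2 on C
  obtain ⟨N₀, hN₀⟩ := chiK_uniform χ χK hχcont hχKcont hχKmono hχKlim C hCcomp
    (c / 2) (by linarith)
  have hKpos : ∀ n ≥ N₀, ∀ x ∈ C, c / 2 < χK n x := by
    intro n hn x hx
    have h1 := hN₀ n hn x hx
    have h2 := hcle x hx
    linarith
  -- VK equals the full integral once the support lies in the window
  have hVKfull : ∀ (g : ℝ → ℝ), tsupport g ⊆ C → ∀ n : ℕ, N₁ ≤ n → ∀ x,
      VK n g x = (χK n x)⁻¹ * ∫ y, G x y * g y ∂m := by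
    intro g hg n hn x
    rw [hVK]
    congr 1
    apply setIntegral_eq_integral_of_forall_compl_eq_zero
    intro y hy
    have hnc : (N₁ : ℝ) ≤ (n : ℝ) := by exact_mod_cast hn
    have hyC : y ∉ C := fun hyC =>
      hy (Set.Icc_subset_Icc (by linarith) hnc hyC)
    have : y ∉ tsupport g := fun hmem => hyC (hg hmem)
    simp [image_eq_zero_of_notMem_tsupport this]
  have hsupf : tsupport f ⊆ C := fun y hy => hN₁ (Or.inl (Or.inl hy))
  have hsuph : tsupport h ⊆ C := fun y hy => hN₁ (Or.inl (Or.inr hy))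
  have hx₀C : x₀ ∈ C := hN₁ (Or.inr rfl)
  have hVf0 : 0 ≤ V f x₀ := by
    rw [hV]
    exact mul_nonneg (inv_nonneg.2 (hχpos x₀).le) (hIfnn x₀)
  -- it suffices to prove the bound up to an arbitrary ε > 0
  have key : ∀ ε : ℝ, 0 < ε → V h x₀ ≤ a + V f x₀ + ε := by
    intro ε hε
    have hB : 0 ≤ a + V f x₀ := by linarith
    set δ : ℝ := ε * (c / 2) / (a + V f x₀ + 1) with hδdef
    have hδ : 0 < δ := by
      rw [hδdef]; positivity
    obtain ⟨N₂, hN₂⟩ := chiK_uniform χ χK hχcont hχKcont hχKmono hχKlim C hCcomp δ hδ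
    set n : ℕ := max N₁ (max N₀ N₂) with hndef
    have hnN₁ : N₁ ≤ n := le_max_left _ _
    have hnN₀ : N₀ ≤ n := le_trans (le_max_left _ _) (le_max_right _ _)
    have hnN₂ : N₂ ≤ n := le_trans (le_max_right _ _) (le_max_right _ _)
    have hCsub : C ⊆ Set.Icc (-(n : ℝ)) n := by
      have hnc : (N₁ : ℝ) ≤ (n : ℝ) := by exact_mod_cast hnN₁
      exact Set.Icc_subset_Icc (by linarith) hnc
    -- key bound on χ versus χK n on C
    have hkey : ∀ x ∈ C, χ x ≤ (1 + 2 * δ / c) * χK n x := by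
      intro x hx
      have h1 := hN₂ n hnN₂ x hx
      have h2 := hKpos n hnN₀ x hx
      have h3 : δ ≤ 2 * δ / c * χK n x := by
        rw [div_mul_eq_mul_div, le_div_iff₀ hc]
        nlinarith
      nlinarith
    have hKp : ∀ x ∈ C, 0 < χK n x := fun x hx => by
      have := hKpos n hnN₀ x hx; linarith
    have ha' : (0:ℝ) ≤ a * (1 + 2 * δ / c) := mul_nonneg ha (by positivity)
    -- the premise of the restricted complete maximum principle
    have hprem : ∀ x ∈ Set.Icc (-(n : ℝ)) n, 0 < h x →
        VK n h x ≤ a * (1 + 2 * δ / c) + VK n f x := by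
      intro x _ hhx
      have hxts : x ∈ tsupport h := subset_tsupport h hhx.ne'
      have hxC : x ∈ C := hsuph hxts
      have hχKx := hKp x hxC
      rw [hVKfull h hsuph n hnN₁ x, hVKfull f hsupf n hnN₁ x]
      show (χK n x)⁻¹ * Ih x ≤ a * (1 + 2 * δ / c) + (χK n x)⁻¹ * If x
      -- from the global hypothesis at x
      have h3 : (χ x)⁻¹ * Ih x ≤ a + (χ x)⁻¹ * If x := by
        have h3' := hyp x hhx
        rw [hV, hV] at h3'
        exact h3'
      rw [inv_mul_le_iff₀ (hχpos x)] at h3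
      have e2 : χ x * (a + (χ x)⁻¹ * If x) = a * χ x + If x := by
        have hcc : χ x * (χ x)⁻¹ = 1 := mul_inv_cancel₀ (hχpos x).ne'
        rw [mul_add, ← mul_assoc, hcc, one_mul, mul_comm (χ x) a]
      rw [e2] at h3
      have h6 := mul_le_mul_of_nonneg_left h3 (inv_nonneg.2 hχKx.le)
      have e3 : (χK n x)⁻¹ * (a * χ x + If x)
          = a * ((χK n x)⁻¹ * χ x) + (χK n x)⁻¹ * If x := by ring
      rw [e3] at h6
      have h5 : (χK n x)⁻¹ * χ x ≤ 1 + 2 * δ / c := by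
        rw [inv_mul_le_iff₀ hχKx, mul_comm]
        exact hkey x hxC
      have h7 := mul_le_mul_of_nonneg_left h5 ha
      linarith
    -- apply the restricted complete maximum principle at x₀
    have hres := hCMP n (a * (1 + 2 * δ / c)) ha' f h hf hh hfc hhc hfnn hhnn
      (hsupf.trans hCsub) (hsuph.trans hCsub) hprem x₀ (hCsub hx₀C)
    rw [hVKfull h hsuph n hnN₁ x₀, hVKfull f hsupf n hnN₁ x₀] at hres
    have hres' : (χK n x₀)⁻¹ * Ih x₀
        ≤ a * (1 + 2 * δ / c) + (χK n x₀)⁻¹ * If x₀ := hres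
    have hχKx₀ := hKp x₀ hx₀C
    -- V h x₀ is dominated by the truncated version at x₀
    have hA : (χ x₀)⁻¹ * Ih x₀ ≤ (χK n x₀)⁻¹ * Ih x₀ :=
      mul_le_mul_of_nonneg_right
        (inv_anti₀ hχKx₀ (hχKle n x₀)) (hIhnn x₀)
    -- bound the f-term
    have h5 : (χK n x₀)⁻¹ * χ x₀ ≤ 1 + 2 * δ / c := by
      rw [inv_mul_le_iff₀ hχKx₀, mul_comm]
      exact hkey x₀ hx₀C
    have hid : (χK n x₀)⁻¹ * If x₀
        = ((χK n x₀)⁻¹ * χ x₀) * ((χ x₀)⁻¹ * If x₀) := by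
      have hcc : χ x₀ * (χ x₀)⁻¹ = 1 := mul_inv_cancel₀ (hχpos x₀).ne'
      rw [mul_assoc ((χK n x₀)⁻¹) (χ x₀), ← mul_assoc (χ x₀), hcc, one_mul]
    have hVfx : (χ x₀)⁻¹ * If x₀ = V f x₀ := (hV f x₀).symm
    have hB2 : (χK n x₀)⁻¹ * If x₀ ≤ (1 + 2 * δ / c) * V f x₀ := by
      rw [hid, hVfx]
      exact mul_le_mul_of_nonneg_right h5 hVf0
    have hVh : V h x₀ = (χ x₀)⁻¹ * Ih x₀ := hV h x₀
    -- combine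
    have hchain : V h x₀ ≤ a * (1 + 2 * δ / c) + (1 + 2 * δ / c) * V f x₀ := by
      rw [hVh]; linarith
    have hfrac : 2 * δ / c * (a + V f x₀) ≤ ε := by
      have hdc : 2 * δ / c = ε / (a + V f x₀ + 1) := by
        rw [hδdef]
        field_simp
      rw [hdc, div_mul_eq_mul_div, div_le_iff₀ (by linarith : (0:ℝ) < a + V f x₀ + 1)]
      nlinarith
    nlinarith [hchain, hfrac]
  by_contra hcon
  push_neg at hcon
  have := key ((V h x₀ - (a + V f x₀)) / 2) (by linarith)
  linarith
end
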